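/- Let n ≥ 2, p ≥ 2, τ = σ_1 σ_2 ⋯ σ_{n−1} in B_n, α = τ^{n+1}, and for z ≥ 1 let Ψ^z_{ij} denote the p × p blocks of Φ^L_{(τ^{(p)})^z} over 𝒜_{np} (so the Ψ^{n+1}_{ij} are the blocks of Φ^L_{α^{(p)}}). Suppose ε : 𝒜_{np} → ℂ is a ring homomorphism such that ε((Φ^L_{α^{(p)}})_{rs}) equals the Kronecker delta δ_{rs} for all p < r ≤ np and all 1 ≤ s ≤ np. Then ε(Ψ^{n+1}_{ij}) = ε(Ψ^i_{1j}) (entrywise) for all 1 ≤ j ≤ i ≤ n, and consequently ε((Φ^L_{α^{(p)}})_{1,p}) = −ε(a_{p+1,p}). -/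

import Mathlib

open scoped TensorProduct

attribute [local instance 2000] Algebra.toModule

/-- Generator index set for the algebra `𝒜ₙ`: pairs `(i,j)` with `1 ≤ i,j ≤ n`, `i ≠ j`. -/
abbrev Idx (n : ℕ) : Type := {q : ℕ × ℕ // q.1 ≠ q.2 ∧ 1 ≤ q.1 ∧ q.1 ≤ n ∧ 1 ≤ q.2 ∧ q.2 ≤ n}

/-- `𝒜ₙ`, the free noncommutative unital `ℤ`-algebra on the generators `a_{ij}`. -/
abbrev FA (n : ℕ) : Type := FreeAlgebra ℤ (Idx n)

/-- The generator `a_{ij}` when the indices are in range (`1 ≤ i,j ≤ n`, `i ≠ j`); `0` otherwise. -/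
noncomputable def gen (n i j : ℕ) : FA n :=
  if h : i ≠ j ∧ 1 ≤ i ∧ i ≤ n ∧ 1 ≤ j ∧ j ≤ n then FreeAlgebra.ι ℤ (⟨(i, j), h⟩ : Idx n) else 0

/-- Image of the generator `a_{ij}` under `φ_{σ_k}`. -/
noncomputable def phiGenImg (n k i j : ℕ) : FA n :=
  if i = k then
    (if j = k + 1 then -gen n (k+1) k
     else gen n (k+1) j - gen n (k+1) k * gen n k j)
  else if i = k + 1 then
    (if j = k then -gen n k (k+1) else gen n k j)
  else
    if j = k then gen n i (k+1) - gen n i k * gen n k (k+1)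
    else if j = k + 1 then gen n i k
    else gen n i j

/-- Image of the generator `a_{ij}` under `φ_{σ_k}⁻¹ = φ_{σ_k⁻¹}`. -/
noncomputable def phiInvGenImg (n k i j : ℕ) : FA n :=
  if i = k + 1 then
    (if j = k then -gen n k (k+1)
     else gen n k j - gen n k (k+1) * gen n (k+1) j)
  else if i = k then
    (if j = k + 1 then -gen n (k+1) k else gen n (k+1) j)
  else
    if j = k + 1 then gen n i k - gen n i (k+1) * gen n (k+1) k
    else if j = k then gen n i (k+1)
    else gen n i j

/-- `φ_{σ_k}` for the letter `(k, true)` and `φ_{σ_k⁻¹}` for the letter `(k, false)`. -/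
noncomputable def phiLetter (n : ℕ) (l : ℕ × Bool) : FA n →ₐ[ℤ] FA n :=
  FreeAlgebra.lift ℤ fun g : Idx n =>
    if l.2 then phiGenImg n l.1 g.val.1 g.val.2 else phiInvGenImg n l.1 g.val.1 g.val.2

/-- `φ_β` for a word `β` in the letters `σ_k^{±1}`, with `φ_{β₁β₂} = φ_{β₁} ∘ φ_{β₂}`. -/
noncomputable def phiWord (n : ℕ) (w : List (ℕ × Bool)) : FA n →ₐ[ℤ] FA n :=
  w.foldr (fun l f => (phiLetter n l).comp f) (AlgHom.id ℤ (FA n))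

/-- `β` is a word in the generators `σ_1^{±1}, …, σ_{n−1}^{±1}` of the braid group `B_n`. -/
def WordIn (n : ℕ) (w : List (ℕ × Bool)) : Prop := ∀ l ∈ w, 1 ≤ l.1 ∧ l.1 + 1 ≤ n

/-- The natural inclusion `𝒜ₙ → 𝒜ₙ₊₁`. -/
noncomputable def incl (n : ℕ) : FA n →ₐ[ℤ] FA (n+1) :=
  FreeAlgebra.lift ℤ fun g : Idx n => gen (n+1) g.val.1 g.val.2

/-- `M` (a matrix recorded as a function `ℕ → ℕ → 𝒜ₙ`, supported on `[1,n] × [1,n]`)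
is the matrix `Φ^L_β`:  `φ*_β(a_{i,n+1}) = ∑_j M_{ij} a_{j,n+1}`. -/
def IsPhiL (n : ℕ) (w : List (ℕ × Bool)) (M : ℕ → ℕ → FA n) : Prop :=
  (∀ i j, i ∉ Finset.Icc 1 n ∨ j ∉ Finset.Icc 1 n → M i j = 0) ∧
  ∀ i ∈ Finset.Icc 1 n,
    phiWord (n+1) w (gen (n+1) i (n+1)) =
      ∑ j ∈ Finset.Icc 1 n, incl n (M i j) * gen (n+1) j (n+1)

/-- `M` is the matrix `Φ^R_β`:  `φ*_β(a_{n+1,i}) = ∑_j a_{n+1,j} M_{ji}`. -/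
def IsPhiR (n : ℕ) (w : List (ℕ × Bool)) (M : ℕ → ℕ → FA n) : Prop :=
  (∀ i j, i ∉ Finset.Icc 1 n ∨ j ∉ Finset.Icc 1 n → M i j = 0) ∧
  ∀ i ∈ Finset.Icc 1 n,
    phiWord (n+1) w (gen (n+1) (n+1) i) =
      ∑ j ∈ Finset.Icc 1 n, gen (n+1) (n+1) j * incl n (M j i)

/-- The permutation (of `ℕ`, via 1-based strand labels) determined by a braid word,
with `perm (w₁ ++ w₂) = perm w₁ * perm w₂`. -/
def permWord (w : List (ℕ × Bool)) : Equiv.Perm ℕ :=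
  w.foldr (fun l f => Equiv.swap l.1 (l.1 + 1) * f) 1

/-- The writhe (exponent sum) of a braid word. -/
def writhe (w : List (ℕ × Bool)) : ℤ :=
  (w.map fun l => if l.2 then (1 : ℤ) else -1).sum

/-- Conjugation, as an algebra map to the opposite algebra. -/
noncomputable def conjHom (n : ℕ) : FA n →ₐ[ℤ] (FA n)ᵐᵒᵖ :=
  FreeAlgebra.lift ℤ fun g : Idx n => MulOpposite.op (gen n g.val.2 g.val.1)

/-- Conjugation `x ↦ x̄`: the `ℤ`-linear anti-automorphism with `a_{ij} ↦ a_{ji}`. -/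
noncomputable def conj (n : ℕ) (x : FA n) : FA n := (conjHom n x).unop

/-- Conjugation as a `ℤ`-linear map. -/
noncomputable def conjLin (n : ℕ) : FA n →ₗ[ℤ] FA n :=
  (MulOpposite.opLinearEquiv ℤ).symm.toLinearMap ∘ₗ (conjHom n).toLinearMap

/-- The word `τ_{a,p} = σ_a σ_{a+1} ⋯ σ_{a+p−1}`. -/
def tauWord (a p : ℕ) : List (ℕ × Bool) := (List.range p).map fun t => (a + t, true)

/-- The word `κ_{a,l} = τ_{a+l−1,p} τ_{a+l−2,p} ⋯ τ_{a,p}`. -/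
def kappaWord (a l p : ℕ) : List (ℕ × Bool) :=
  (((List.range l).reverse).map fun t => tauWord (a + t) p).flatten

/-- The inverse of a braid word. -/
def invWord (w : List (ℕ × Bool)) : List (ℕ × Bool) := w.reverse.map fun l => (l.1, !l.2)

/-- The `p`-cable `α^{(p)}` of a braid word `α` (each strand replaced by `p` parallel strands):
substitute `σ_m ↦ κ_{(m−1)p+1,p}` and `σ_m⁻¹ ↦ κ_{(m−1)p+1,p}⁻¹`. -/
def cable (p : ℕ) (w : List (ℕ × Bool)) : List (ℕ × Bool) :=
  (w.map fun l =>
    if l.2 then kappaWord ((l.1 - 1) * p + 1) p p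
    else invWord (kappaWord ((l.1 - 1) * p + 1) p p)).flatten

/-- The product `a_{x₁x₂} a_{x₂x₃} ⋯ a_{x_{m-1}x_m}` along a list `[x₁, …, x_m]`
(`1` for lists of length `≤ 1`). -/
noncomputable def pathFactors (n : ℕ) : List ℕ → FA n
  | x :: y :: rest => gen n x y * pathFactors n (y :: rest)
  | _ => 1

/-- `A(i,j,X) = Σ_{Y ⊆ X} (−1)^{|Y|} a_{i y₁} a_{y₁ y₂} ⋯ a_{y_k j}` (ascending order on `Y`). -/
noncomputable def Aexp (n i j : ℕ) (X : Finset ℕ) : FA n :=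
  ∑ Y ∈ X.powerset, ((-1 : ℤ) ^ Y.card) • pathFactors n (i :: (Y.sort (· ≤ ·) ++ [j]))

/-- `A'(i,j,X) = Σ_{Y ⊆ X} (−1)^{|Y|} a_{i y_k} a_{y_k y_{k−1}} ⋯ a_{y₁ j}` (descending order). -/
noncomputable def A'exp (n i j : ℕ) (X : Finset ℕ) : FA n :=
  ∑ Y ∈ X.powerset, ((-1 : ℤ) ^ Y.card) • pathFactors n (i :: ((Y.sort (· ≤ ·)).reverse ++ [j]))

/-- `B'(i,j,X) = Σ_{Y ⊆ X, min Y ≠ j} c_Y a_{i y_k} ⋯ a_{y₁ j}`, where `c_Y = (−1)^{|Y|+1}` if all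
elements of `Y` exceed `j` (including `Y = ∅`), and `c_Y = (−1)^{|Y|}` otherwise. -/
noncomputable def B'exp (n i j : ℕ) (X : Finset ℕ) : FA n :=
  ∑ Y ∈ X.powerset.filter (fun Y => Y.min ≠ (j : WithTop ℕ)),
    (if ∀ y ∈ Y, j < y then ((-1 : ℤ) ^ (Y.card + 1)) else ((-1 : ℤ) ^ Y.card)) •
      pathFactors n (i :: ((Y.sort (· ≤ ·)).reverse ++ [j]))

/-- For `i = (q_i − 1)p + r_i` with `1 ≤ r_i ≤ p`: the quotient `q_i`. -/
def qIdx (p i : ℕ) : ℕ := (i - 1) / p + 1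

/-- For `i = (q_i − 1)p + r_i` with `1 ≤ r_i ≤ p`: the remainder `r_i`. -/
def rIdx (p i : ℕ) : ℕ := (i - 1) % p + 1

/-- The homomorphism `ψ : 𝒜_{kp} → 𝒜_k ⊗ 𝒜_p`. -/
noncomputable def psi (k p : ℕ) : FA (k * p) →ₐ[ℤ] FA k ⊗[ℤ] FA p :=
  FreeAlgebra.lift ℤ fun g : Idx (k * p) =>
    if qIdx p g.val.1 = qIdx p g.val.2 then
      (1 : FA k) ⊗ₜ[ℤ] gen p (rIdx p g.val.1) (rIdx p g.val.2)
    else if rIdx p g.val.1 = rIdx p g.val.2 then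
      gen k (qIdx p g.val.1) (qIdx p g.val.2) ⊗ₜ[ℤ] (1 : FA p)
    else if (qIdx p g.val.1 < qIdx p g.val.2 ∧ rIdx p g.val.2 < rIdx p g.val.1) ∨
            (qIdx p g.val.2 < qIdx p g.val.1 ∧ rIdx p g.val.1 < rIdx p g.val.2) then 0
    else gen k (qIdx p g.val.1) (qIdx p g.val.2) ⊗ₜ[ℤ] gen p (rIdx p g.val.1) (rIdx p g.val.2)

/-- `ψ*(x · a_{i,*}) = ψ(x) · (a_{q_i,*} ⊗ a_{r_i,*})`, the image of the element `x · a_{i,*}`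
of `𝒜_{kp}^L` under `ψ* : 𝒜_{kp}^L → 𝒜_k^L ⊗ 𝒜_p^L`, the target realized inside
`𝒜_{k+1} ⊗ 𝒜_{p+1}`. -/
noncomputable def psiStarElt (k p : ℕ) (x : FA (k * p)) (i : ℕ) :
    FA (k+1) ⊗[ℤ] FA (p+1) :=
  (Algebra.TensorProduct.map (incl k) (incl p)) (psi k p x) *
    (gen (k+1) (qIdx p i) (k+1) ⊗ₜ[ℤ] gen (p+1) (rIdx p i) (p+1))

/-- The `(i,j)` entry of `Δ(β) = diag[(−1)^{w(β)}, 1, …, 1]` (1-based indices). -/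
noncomputable def deltaEnt (w : List (ℕ × Bool)) (i j : ℕ) : ℂ :=
  if i = j then (if i = 1 then (-1 : ℂ) ^ writhe w else 1) else 0

/-- The word `(τ^{(p)})^z` in the generators of `B_{np}`, for `τ = σ_1⋯σ_{n−1} ∈ B_n`;
`powWord n p (n+1)` is the cable `α^{(p)}` of `α = τ^{n+1}`. -/
def powWord (n p z : ℕ) : List (ℕ × Bool) :=
  (List.replicate z (cable p (tauWord 1 (n-1)))).flatten

/-!
Write `β = τ^{(p)}` and `E_z = ε(Φ^L_{β^z})`, read in `p × p` blocks. As `β` is the cable of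
`σ_1 ⋯ σ_{n−1}`, the automorphism `φ_β` sends `a_{u,*}` to `a_{u−(n−1)p,*}` when `u` lies in the
last block, and to `a_{u+p,*}` plus a left combination of `a_{1,*}, …, a_{p,*}` otherwise. Through
`Φ^L_{β^{z+1}} = φ_{β^z}(Φ^L_β) Φ^L_{β^z}` this becomes a recursion on each column of `E_z`: the
last block row of `E_{z+1}` is the first block row of `E_z`, and every other block row of
`E_{z+1}` is the next block row of `E_z` wherever the first block row of `E_z` vanishes.
Iterating, block row `i` of `E_{n+1}` equals block row `1` of `E_i` in every column where the first
block rows of `E_{i+1}, …, E_n` vanish. Running the same identity backwards from `w = n`, the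
hypothesis on the rows `r > p` of `E_{n+1}` forces the first block row of `E_w` to vanish in the
block columns `j < w`, which is all that is needed.
-/

section Generators

lemma gen_eq_ι {n i j : ℕ} (h : i ≠ j ∧ 1 ≤ i ∧ i ≤ n ∧ 1 ≤ j ∧ j ≤ n) :
    gen n i j = FreeAlgebra.ι ℤ (⟨(i, j), h⟩ : Idx n) := dif_pos h

lemma incl_gen {n i j : ℕ} (hi : i ≤ n) (hj : j ≤ n) : incl n (gen n i j) = gen (n+1) i j := by
  by_cases h : i ≠ j ∧ 1 ≤ i ∧ i ≤ n ∧ 1 ≤ j ∧ j ≤ n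
  · rw [gen_eq_ι h, incl, FreeAlgebra.lift_ι_apply]
  · rw [gen, dif_neg h, map_zero, gen, dif_neg (by omega)]

end Generators

section PhiWord

lemma phiWord_append (n : ℕ) (w₁ w₂ : List (ℕ × Bool)) (x : FA n) :
    phiWord n (w₁ ++ w₂) x = phiWord n w₁ (phiWord n w₂ x) := by
  induction w₁ with
  | nil => rfl
  | cons l w ih => exact congrArg (phiLetter n l) ih

lemma phiLetter_gen (n : ℕ) (l : ℕ × Bool) {i j : ℕ} (h : i ≠ j ∧ 1 ≤ i ∧ i ≤ n ∧ 1 ≤ j ∧ j ≤ n) :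
    phiLetter n l (gen n i j) =
      if l.2 then phiGenImg n l.1 i j else phiInvGenImg n l.1 i j := by
  rw [gen_eq_ι h, phiLetter, FreeAlgebra.lift_ι_apply]

lemma phiLetter_incl (n : ℕ) {l : ℕ × Bool} (hl1 : 1 ≤ l.1) (hl2 : l.1 + 1 ≤ n) (x : FA n) :
    phiLetter (n+1) l (incl n x) = incl n (phiLetter n l x) := by
  suffices h : (phiLetter (n+1) l).comp (incl n) = (incl n).comp (phiLetter n l) from
    DFunLike.congr_fun h x
  refine FreeAlgebra.hom_ext (funext fun ⟨⟨i, j⟩, hij⟩ => ?_)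
  simp only [Function.comp_apply, AlgHom.comp_apply]
  rw [← gen_eq_ι hij, incl_gen hij.2.2.1 hij.2.2.2.2, phiLetter_gen (n+1) l (by omega),
    phiLetter_gen n l hij]
  obtain ⟨k, b⟩ := l
  simp only at hij hl1 hl2 ⊢
  obtain ⟨-, -, hi, -, hj⟩ := hij
  have hk : k ≤ n := by omega
  cases b <;> simp only [Bool.false_eq_true, if_false, if_true, phiGenImg, phiInvGenImg] <;>
    split_ifs <;> simp only [map_sub, map_mul, map_neg, incl_gen, hi, hj, hk, hl2]

lemma phiWord_incl (n : ℕ) {w : List (ℕ × Bool)} (hw : WordIn n w) (x : FA n) :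
    phiWord (n+1) w (incl n x) = incl n (phiWord n w x) := by
  induction w with
  | nil => rfl
  | cons l w ih =>
    obtain ⟨hl1, hl2⟩ := hw l List.mem_cons_self
    exact (congrArg (phiLetter (n+1) l) (ih fun l' hl' => hw l' (List.mem_cons_of_mem l hl'))).trans
      (phiLetter_incl n hl1 hl2 _)

lemma phiWord_incl_mul {N : ℕ} {w : List (ℕ × Bool)} (hw : WordIn N w) (x : FA N) (y : FA (N+1)) :
    phiWord (N+1) w (incl N x * y) = incl N (phiWord N w x) * phiWord (N+1) w y := by
  rw [map_mul, phiWord_incl N hw]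

end PhiWord

section RowCoeff

/-- A representation of `𝒜_{N+1}` by `2 × 2` matrices over `𝒜_N` in which `incl N` acts by scalars
and `a_{j,N+1}` by the matrix unit `E₀₁` (the other `a_{k,N+1}` and all `a_{N+1,k}` act by `0`).
Its `(0,1)` entry therefore reads off the left coefficient of `a_{j,N+1}` in
`∑ₖ incl N (xₖ) * a_{k,N+1}`. -/
noncomputable def coeffRep (N j : ℕ) : FA (N+1) →ₐ[ℤ] Matrix (Fin 2) (Fin 2) (FA N) :=
  FreeAlgebra.lift ℤ fun g : Idx (N+1) =>
    if g.val.2 = N+1 then (if g.val.1 = j then Matrix.single 0 1 1 else 0)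
    else if g.val.1 = N+1 then 0
    else Matrix.scalar (Fin 2) (gen N g.val.1 g.val.2)

lemma coeffRep_incl (N j : ℕ) (x : FA N) :
    coeffRep N j (incl N x) = Matrix.scalar (Fin 2) x := by
  suffices h : (coeffRep N j).comp (incl N) = (Matrix.scalar (Fin 2)).toIntAlgHom from
    DFunLike.congr_fun h x
  refine FreeAlgebra.hom_ext (funext fun ⟨⟨i, k⟩, hik⟩ => ?_)
  simp only [Function.comp_apply, AlgHom.comp_apply]
  rw [← gen_eq_ι hik, incl_gen hik.2.2.1 hik.2.2.2.2, gen_eq_ι (n := N+1) (by omega), coeffRep,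
    FreeAlgebra.lift_ι_apply]
  simp only at hik ⊢
  rw [if_neg (by omega), if_neg (by omega)]
  rfl

noncomputable def rowCoeff (N j : ℕ) : FA (N+1) →ₗ[ℤ] FA N :=
  Matrix.entryLinearMap ℤ (FA N) 0 1 ∘ₗ (coeffRep N j).toLinearMap

lemma rowCoeff_incl_mul (N j : ℕ) (x : FA N) (y : FA (N+1)) :
    rowCoeff N j (incl N x * y) = x * rowCoeff N j y := by
  simp [rowCoeff, coeffRep_incl, Matrix.scalar_apply, Matrix.diagonal_mul]

lemma rowCoeff_gen (N j : ℕ) {k : ℕ} (hk : k ∈ Finset.Icc 1 N) :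
    rowCoeff N j (gen (N+1) k (N+1)) = if k = j then 1 else 0 := by
  rw [Finset.mem_Icc] at hk
  rw [gen_eq_ι (by omega)]
  simp only [rowCoeff, coeffRep, LinearMap.coe_comp, Function.comp_apply, AlgHom.toLinearMap_apply,
    FreeAlgebra.lift_ι_apply]
  split_ifs <;> simp

lemma rowCoeff_sum (N j : ℕ) {S : Finset ℕ} (hS : S ⊆ Finset.Icc 1 N) (d : ℕ → FA N) :
    rowCoeff N j (∑ t ∈ S, incl N (d t) * gen (N+1) t (N+1)) = if j ∈ S then d j else 0 := by
  simp only [map_sum, rowCoeff_incl_mul]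
  rw [Finset.sum_congr rfl fun t ht => by rw [rowCoeff_gen N j (hS ht), mul_ite, mul_one, mul_zero]]
  exact Finset.sum_ite_eq' S j d

lemma IsPhiL.apply_eq_rowCoeff {N : ℕ} {w : List (ℕ × Bool)} {M : ℕ → ℕ → FA N}
    (hM : IsPhiL N w M) {u v : ℕ} (hu : u ∈ Finset.Icc 1 N) (hv : v ∈ Finset.Icc 1 N) :
    M u v = rowCoeff N v (phiWord (N+1) w (gen (N+1) u (N+1))) := by
  rw [hM.2 u hu, rowCoeff_sum N v subset_rfl, if_pos hv]

/-- Row `u` of the chain rule `Φ^L_{w w'} = φ_w(Φ^L_{w'}) Φ^L_w`. -/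
lemma IsPhiL.apply_append {N : ℕ} {w w' : List (ℕ × Bool)} {M M' : ℕ → ℕ → FA N}
    (hw : WordIn N w) (hM : IsPhiL N w M) (hM' : IsPhiL N (w ++ w') M')
    {u u' : ℕ} {S : Finset ℕ} {d : ℕ → FA N} (hu : u ∈ Finset.Icc 1 N) (hu' : u' ∈ Finset.Icc 1 N)
    (hS : S ⊆ Finset.Icc 1 N)
    (hrow : phiWord (N+1) w' (gen (N+1) u (N+1)) =
      gen (N+1) u' (N+1) + ∑ t ∈ S, incl N (d t) * gen (N+1) t (N+1))
    {v : ℕ} (hv : v ∈ Finset.Icc 1 N) :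
    M' u v = M u' v + ∑ t ∈ S, phiWord N w (d t) * M t v := by
  rw [hM'.apply_eq_rowCoeff hu hv, phiWord_append, hrow, map_add, map_add, map_sum, map_sum,
    ← hM.apply_eq_rowCoeff hu' hv]
  refine congrArg _ (Finset.sum_congr rfl fun t ht => ?_)
  rw [phiWord_incl_mul hw, rowCoeff_incl_mul, ← hM.apply_eq_rowCoeff (hS ht) hv]

end RowCoeff

section Sigma

variable (n k : ℕ)

lemma phiLetter_pos_gen_of_ne {i j : ℕ} (h : i ≠ j ∧ 1 ≤ i ∧ i ≤ n ∧ 1 ≤ j ∧ j ≤ n)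
    (hik : i ≠ k) (hik1 : i ≠ k+1) (hjk : j ≠ k) (hjk1 : j ≠ k+1) :
    phiLetter n (k, true) (gen n i j) = gen n i j := by
  rw [phiLetter_gen n _ h]
  simp only [if_true, phiGenImg, if_neg hik, if_neg hik1, if_neg hjk, if_neg hjk1]

lemma phiLetter_pos_gen_left {j : ℕ} (h : k ≠ j ∧ 1 ≤ k ∧ k ≤ n ∧ 1 ≤ j ∧ j ≤ n)
    (hjk1 : j ≠ k+1) :
    phiLetter n (k, true) (gen n k j) = gen n (k+1) j - gen n (k+1) k * gen n k j := by
  rw [phiLetter_gen n _ h]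
  simp only [if_true, phiGenImg, if_neg hjk1]

lemma phiLetter_pos_gen_succ_left {j : ℕ} (h : k+1 ≠ j ∧ 1 ≤ k+1 ∧ k+1 ≤ n ∧ 1 ≤ j ∧ j ≤ n)
    (hjk : j ≠ k) :
    phiLetter n (k, true) (gen n (k+1) j) = gen n k j := by
  rw [phiLetter_gen n _ h]
  simp only [if_true, phiGenImg, if_neg (Nat.succ_ne_self k), if_neg hjk]

lemma phiLetter_pos_gen_succ_right {i : ℕ} (h : i ≠ k+1 ∧ 1 ≤ i ∧ i ≤ n ∧ 1 ≤ k+1 ∧ k+1 ≤ n)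
    (hik : i ≠ k) :
    phiLetter n (k, true) (gen n i (k+1)) = gen n i k := by
  rw [phiLetter_gen n _ h]
  simp only [if_true, phiGenImg, if_neg hik, if_neg h.1, if_neg (Nat.succ_ne_self k)]

end Sigma

section Tau

variable {N b q : ℕ}

lemma tauWord_succ (b q : ℕ) : tauWord b (q+1) = tauWord b q ++ [(b+q, true)] := by
  simp [tauWord, List.range_succ]

lemma wordIn_tauWord (hb : 1 ≤ b) (h : b + q ≤ N) : WordIn N (tauWord b q) := by
  intro l hl
  simp only [tauWord, List.mem_map, List.mem_range] at hl
  obtain ⟨t, ht, rfl⟩ := hl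
  simp only
  omega

lemma phiWord_tauWord_gen_of_not_mem (hbq : b + q ≤ N) {i : ℕ} (hi1 : 1 ≤ i)
    (hi : i ≤ N) (hout : i < b ∨ b + q < i) :
    phiWord (N+1) (tauWord b q) (gen (N+1) i (N+1)) = gen (N+1) i (N+1) := by
  induction q with
  | zero => rfl
  | succ q ih =>
    rw [tauWord_succ, phiWord_append]
    exact (congrArg (phiWord (N+1) (tauWord b q)) (phiLetter_pos_gen_of_ne (N+1) (b+q)
      (by omega) (by omega) (by omega) (by omega) (by omega))).trans (ih (by omega) (by omega))

lemma phiWord_tauWord_gen_right (hbq : b + q ≤ N) {x : ℕ} (hx : b + q < x)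
    (hxN : x ≤ N) :
    phiWord (N+1) (tauWord b q) (gen (N+1) x (b+q)) = gen (N+1) x b := by
  induction q with
  | zero => rfl
  | succ q ih =>
    rw [tauWord_succ, phiWord_append, Nat.add_succ]
    exact (congrArg (phiWord (N+1) (tauWord b q)) (phiLetter_pos_gen_succ_right (N+1) (b+q)
      (by omega) (by omega))).trans (ih (by omega) (by omega))

lemma phiWord_tauWord_gen_last (hbq : b + q ≤ N) :
    phiWord (N+1) (tauWord b q) (gen (N+1) (b+q) (N+1)) = gen (N+1) b (N+1) := by
  induction q with
  | zero => rfl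
  | succ q ih =>
    rw [tauWord_succ, phiWord_append, Nat.add_succ]
    exact (congrArg (phiWord (N+1) (tauWord b q)) (phiLetter_pos_gen_succ_left (N+1) (b+q)
      (by omega) (by omega))).trans (ih (by omega))

lemma phiWord_tauWord_gen_of_mem (hb : 1 ≤ b) (hbq : b + q ≤ N) {i : ℕ} (hi : b ≤ i)
    (hi2 : i < b + q) :
    phiWord (N+1) (tauWord b q) (gen (N+1) i (N+1)) =
      gen (N+1) (i+1) (N+1) - gen (N+1) (i+1) b * gen (N+1) b (N+1) := by
  induction q with
  | zero => omega
  | succ q ih =>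
    rw [tauWord_succ, phiWord_append]
    rcases Nat.lt_or_ge i (b + q) with hlt | hge
    · exact (congrArg (phiWord (N+1) (tauWord b q)) (phiLetter_pos_gen_of_ne (N+1) (b+q)
        (by omega) (by omega) (by omega) (by omega) (by omega))).trans (ih (by omega) hlt)
    · obtain rfl : i = b + q := by omega
      have hσ : phiWord (N+1) [(b+q, true)] (gen (N+1) (b+q) (N+1)) =
          gen (N+1) (b+q+1) (N+1) - gen (N+1) (b+q+1) (b+q) * gen (N+1) (b+q) (N+1) :=
        phiLetter_pos_gen_left (N+1) (b+q) (by omega) (by omega)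
      rw [hσ, map_sub, map_mul,
        phiWord_tauWord_gen_of_not_mem (by omega) (by omega) (by omega) (by omega),
        phiWord_tauWord_gen_right (by omega) (by omega) (by omega),
        phiWord_tauWord_gen_last (by omega)]

end Tau

section Kappa

variable {N a l p : ℕ}

lemma kappaWord_succ (a l p : ℕ) :
    kappaWord a (l+1) p = tauWord (a+l) p ++ kappaWord a l p := by
  simp [kappaWord, List.range_succ]

lemma kappaWord_zero (a p : ℕ) : kappaWord a 0 p = [] := rfl

lemma wordIn_kappaWord (ha : 1 ≤ a) (h : a + l + p ≤ N + 1) : WordIn N (kappaWord a l p) := by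
  intro x hx
  simp only [kappaWord, tauWord, List.mem_flatten, List.mem_map, List.mem_reverse,
    List.mem_range] at hx
  obtain ⟨_, ⟨t, ht, rfl⟩, hx⟩ := hx
  simp only [List.mem_map, List.mem_range] at hx
  obtain ⟨t', ht', rfl⟩ := hx
  simp only
  omega

lemma phiWord_kappaWord_gen_of_lt (h : a + l + p ≤ N + 1) {i : ℕ} (hi1 : 1 ≤ i) (hi : i < a) :
    phiWord (N+1) (kappaWord a l p) (gen (N+1) i (N+1)) = gen (N+1) i (N+1) := by
  induction l with
  | zero => rfl
  | succ l ih =>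
    rw [kappaWord_succ, phiWord_append, ih (by omega)]
    exact phiWord_tauWord_gen_of_not_mem (by omega) hi1 (by omega) (by omega)

lemma phiWord_kappaWord_gen_of_ge (h : a + l + p ≤ N + 1) {i : ℕ} (hi : a + l + p ≤ i)
    (hiN : i ≤ N) :
    phiWord (N+1) (kappaWord a l p) (gen (N+1) i (N+1)) = gen (N+1) i (N+1) := by
  induction l with
  | zero => rfl
  | succ l ih =>
    rw [kappaWord_succ, phiWord_append, ih (by omega) (by omega)]
    exact phiWord_tauWord_gen_of_not_mem (by omega) (by omega) hiN (by omega)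

lemma phiWord_kappaWord_gen_second_block (ha : 1 ≤ a) (hl : l ≤ p) (h : a + 2*p ≤ N + 1)
    {r : ℕ} (hr : r < p) :
    phiWord (N+1) (kappaWord a l p) (gen (N+1) (a+p+r) (N+1)) =
      if r < l then gen (N+1) (a+r) (N+1) else gen (N+1) (a+p+r) (N+1) := by
  induction l with
  | zero => rw [if_neg (Nat.not_lt_zero r)]; rfl
  | succ l ih =>
    rw [kappaWord_succ, phiWord_append, ih (by omega)]
    rcases lt_trichotomy r l with hrl | rfl | hlr
    · rw [if_pos hrl, if_pos (by omega)]
      exact phiWord_tauWord_gen_of_not_mem (by omega) (by omega) (by omega) (by omega)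
    · rw [if_neg (lt_irrefl r), if_pos (by omega), add_right_comm]
      exact phiWord_tauWord_gen_last (by omega)
    · rw [if_neg (by omega), if_neg (by omega)]
      exact phiWord_tauWord_gen_of_not_mem (by omega) (by omega) (by omega) (by omega)

lemma phiWord_kappaWord_gen_first_block (ha : 1 ≤ a) (hl : l + 1 ≤ p) (h : a + 2*p ≤ N + 1)
    {s : ℕ} (hs : s < p) :
    ∃ d : ℕ → FA N,
      phiWord (N+1) (kappaWord a (l+1) p) (gen (N+1) (a+s) (N+1)) =
        gen (N+1) (a+s+l+1) (N+1) - gen (N+1) (a+s+l+1) (a+l) * gen (N+1) (a+l) (N+1)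
          + ∑ t ∈ Finset.range l, incl N (d t) * gen (N+1) (a+t) (N+1) := by
  induction l with
  | zero =>
    refine ⟨0, ?_⟩
    rw [kappaWord_succ, kappaWord_zero, List.append_nil]
    simpa using phiWord_tauWord_gen_of_mem ha (by omega) (by omega) (by omega)
  | succ l ih =>
    obtain ⟨d, hd⟩ := ih (by omega)
    simp only [← add_assoc]
    have hτ : WordIn N (tauWord (a+l+1) p) := wordIn_tauWord (by omega) (by omega)
    have hfix : ∀ t ≤ l, phiWord (N+1) (tauWord (a+l+1) p) (gen (N+1) (a+t) (N+1)) =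
        gen (N+1) (a+t) (N+1) :=
      fun t ht => phiWord_tauWord_gen_of_not_mem (by omega) (by omega) (by omega) (by omega)
    have hlead : phiWord (N+1) (tauWord (a+l+1) p) (gen (N+1) (a+s+l+1) (N+1)) =
        gen (N+1) (a+s+l+1+1) (N+1) - gen (N+1) (a+s+l+1+1) (a+l+1) * gen (N+1) (a+l+1) (N+1) :=
      phiWord_tauWord_gen_of_mem (by omega) (by omega) (by omega) (by omega)
    have hcoef : phiWord (N+1) (tauWord (a+l+1) p) (gen (N+1) (a+s+l+1) (a+l)) =
        incl N (phiWord N (tauWord (a+l+1) p) (gen N (a+s+l+1) (a+l))) := by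
      rw [← incl_gen (by omega) (by omega), phiWord_incl N hτ]
    refine ⟨fun t => if t < l then phiWord N (tauWord (a+l+1) p) (d t)
      else -phiWord N (tauWord (a+l+1) p) (gen N (a+s+l+1) (a+l)), ?_⟩
    have hsum : ∑ t ∈ Finset.range l,
        phiWord (N+1) (tauWord (a+l+1) p) (incl N (d t) * gen (N+1) (a+t) (N+1)) =
        ∑ t ∈ Finset.range l, incl N (if t < l then phiWord N (tauWord (a+l+1) p) (d t)
          else -phiWord N (tauWord (a+l+1) p) (gen N (a+s+l+1) (a+l))) * gen (N+1) (a+t) (N+1) :=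
      Finset.sum_congr rfl fun t ht => by
        rw [phiWord_incl_mul hτ, hfix t (Finset.mem_range.mp ht).le,
          if_pos (Finset.mem_range.mp ht)]
    rw [kappaWord_succ, ← add_assoc, phiWord_append, hd, map_add, map_sub, map_sum, map_mul, hlead,
      hcoef, hfix l le_rfl, hsum, Finset.sum_range_succ]
    beta_reduce
    rw [if_neg (lt_irrefl l), map_neg, neg_mul]
    abel

end Kappa

section CableTau

variable {N p m k : ℕ}

lemma cable_tauWord_one_succ (p m : ℕ) :
    cable p (tauWord 1 (m+1)) = cable p (tauWord 1 m) ++ kappaWord (m*p+1) p p := by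
  simp [cable, tauWord, List.range_succ]

lemma wordIn_cable_tauWord (hN : (m+1)*p ≤ N) : WordIn N (cable p (tauWord 1 m)) := by
  induction m with
  | zero => simp [WordIn, cable, tauWord]
  | succ m ih =>
    have hm : (m+1+1)*p = m*p + p + p := by ring
    rw [cable_tauWord_one_succ, WordIn, List.forall_mem_append]
    exact ⟨ih (by nlinarith), wordIn_kappaWord (by omega) (by omega)⟩

lemma phiWord_cable_tauWord_gen_of_gt (hN : (m+1)*p ≤ N) {i : ℕ} (hi : (m+1)*p < i)
    (hiN : i ≤ N) :
    phiWord (N+1) (cable p (tauWord 1 m)) (gen (N+1) i (N+1)) = gen (N+1) i (N+1) := by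
  induction m with
  | zero => rfl
  | succ m ih =>
    have hm : (m+1+1)*p = m*p + p + p := by ring
    rw [cable_tauWord_one_succ, phiWord_append,
      phiWord_kappaWord_gen_of_ge (by omega) (by omega) hiN]
    exact ih (by nlinarith) (by nlinarith)

lemma phiWord_cable_tauWord_gen_of_le (hmk : m ≤ k) (hN : (k+1)*p ≤ N) {i : ℕ} (hi1 : 1 ≤ i)
    (hi : i ≤ m*p) :
    phiWord (N+1) (cable p (tauWord 1 k)) (gen (N+1) i (N+1)) =
      phiWord (N+1) (cable p (tauWord 1 m)) (gen (N+1) i (N+1)) := by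
  induction k, hmk using Nat.le_induction with
  | base => rfl
  | succ k hmk ih =>
    have hk : (k+1+1)*p = k*p + p + p := by ring
    have hmk' : m*p ≤ k*p := Nat.mul_le_mul_right p hmk
    rw [cable_tauWord_one_succ, phiWord_append,
      phiWord_kappaWord_gen_of_lt (by omega) hi1 (by omega)]
    exact ih (by nlinarith)

lemma phiWord_cable_tauWord_gen_last_block (hN : (m+1)*p ≤ N) {t : ℕ} (ht1 : 1 ≤ t)
    (htp : t ≤ p) :
    phiWord (N+1) (cable p (tauWord 1 m)) (gen (N+1) (m*p+t) (N+1)) = gen (N+1) t (N+1) := by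
  induction m with
  | zero => simp only [Nat.zero_mul, Nat.zero_add]; rfl
  | succ m ih =>
    have hm : (m+1+1)*p = m*p + p + p := by ring
    have hb := phiWord_kappaWord_gen_second_block (N := N) (a := m*p+1) (by omega) le_rfl
      (by omega) (show t - 1 < p by omega)
    rw [if_pos (by omega), show m*p+1+p+(t-1) = (m+1)*p+t by rw [Nat.succ_mul]; omega,
      show m*p+1+(t-1) = m*p+t by omega] at hb
    rw [cable_tauWord_one_succ, phiWord_append, hb]
    exact ih (by nlinarith)

lemma sum_Icc_one_eq_sum_range_add {M : Type*} [AddCommMonoid M] (p : ℕ) (hp : 1 ≤ p)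
    (f : ℕ → M) : ∑ t ∈ Finset.Icc 1 p, f t = ∑ t ∈ Finset.range (p-1), f (t+1) + f p := by
  rw [← Finset.Ico_add_one_right_eq_Icc, Finset.sum_Ico_eq_sum_range,
    show p + 1 - 1 = p - 1 + 1 by omega, Finset.sum_range_succ, show 1 + (p-1) = p by omega]
  simp only [add_comm 1]

/-- The `κ`-factors after the `m`-th fix `a_{mp+s,N+1}`; the `m`-th sends it to `a_{(m+1)p+s,N+1}`
plus terms in block `m`, which the earlier factors carry onto block `0` while fixing block `m+1`. -/
lemma phiWord_cable_tauWord_gen_row (hp : 1 ≤ p) (hmk : m < k) (hN : (k+1)*p ≤ N) {s : ℕ}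
    (hs1 : 1 ≤ s) (hsp : s ≤ p) :
    ∃ d : ℕ → FA N,
      phiWord (N+1) (cable p (tauWord 1 k)) (gen (N+1) (m*p+s) (N+1)) =
        gen (N+1) ((m+1)*p+s) (N+1) + ∑ t ∈ Finset.Icc 1 p, incl N (d t) * gen (N+1) t (N+1) ∧
      d p = -phiWord N (cable p (tauWord 1 m)) (gen N ((m+1)*p+s) ((m+1)*p)) := by
  have hm : (m+1)*p = m*p + p := Nat.succ_mul m p
  have hmk' : (m+1+1)*p ≤ (k+1)*p := Nat.mul_le_mul_right p (by omega)
  have hc : WordIn N (cable p (tauWord 1 m)) := wordIn_cable_tauWord (by nlinarith)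
  obtain ⟨d, hd⟩ := phiWord_kappaWord_gen_first_block (N := N) (a := m*p+1) (l := p-1)
    (by omega) (by omega) (by nlinarith) (show s - 1 < p by omega)
  rw [Nat.sub_add_cancel hp, show m*p+1+(s-1) = m*p+s by omega,
    show m*p+s+(p-1)+1 = (m+1)*p+s by omega, show m*p+1+(p-1) = (m+1)*p by omega] at hd
  have hlast : ∀ t, 1 ≤ t → t ≤ p → phiWord (N+1) (cable p (tauWord 1 m))
      (gen (N+1) (m*p+t) (N+1)) = gen (N+1) t (N+1) :=
    fun t ht1 htp => phiWord_cable_tauWord_gen_last_block (by nlinarith) ht1 htp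
  have hcoef : phiWord (N+1) (cable p (tauWord 1 m)) (gen (N+1) ((m+1)*p+s) ((m+1)*p)) =
      incl N (phiWord N (cable p (tauWord 1 m)) (gen N ((m+1)*p+s) ((m+1)*p))) := by
    rw [← incl_gen (by nlinarith) (by nlinarith), phiWord_incl N hc]
  refine ⟨fun t => if t = p then
      -phiWord N (cable p (tauWord 1 m)) (gen N ((m+1)*p+s) ((m+1)*p))
    else phiWord N (cable p (tauWord 1 m)) (d (t-1)), ?_, if_pos rfl⟩
  have hsum : ∑ t ∈ Finset.range (p-1), phiWord (N+1) (cable p (tauWord 1 m))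
      (incl N (d t) * gen (N+1) (m*p+1+t) (N+1)) =
      ∑ t ∈ Finset.range (p-1), incl N (if t + 1 = p then
        -phiWord N (cable p (tauWord 1 m)) (gen N ((m+1)*p+s) ((m+1)*p))
        else phiWord N (cable p (tauWord 1 m)) (d (t + 1 - 1))) * gen (N+1) (t+1) (N+1) :=
    Finset.sum_congr rfl fun t ht => by
      rw [Finset.mem_range] at ht
      rw [phiWord_incl_mul hc, show m*p+1+t = m*p+(t+1) by omega, hlast (t+1) (by omega) (by omega),
        if_neg (by omega), Nat.add_sub_cancel]
  rw [phiWord_cable_tauWord_gen_of_le (m := m+1) hmk hN (by omega) (by omega),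
    cable_tauWord_one_succ, phiWord_append, hd, map_add, map_sub, map_sum, hsum,
    phiWord_cable_tauWord_gen_of_gt (by nlinarith) (by omega) (by nlinarith), map_mul, hcoef,
    hm, hlast p hp le_rfl, sum_Icc_one_eq_sum_range_add p hp]
  beta_reduce
  rw [if_pos rfl, map_neg, neg_mul]
  abel

lemma IsPhiL.cable_tauWord_apply_one {M : ℕ → ℕ → FA N} (hp : 1 ≤ p) (hk : 1 ≤ k)
    (hN : (k+1)*p ≤ N) (hM : IsPhiL N (cable p (tauWord 1 k)) M) :
    M 1 p = -gen N (p+1) p := by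
  have h2p : p + p ≤ N := by nlinarith
  obtain ⟨d, hrow, hd⟩ := phiWord_cable_tauWord_gen_row (m := 0) hp hk hN le_rfl hp
  simp only [zero_mul, zero_add, one_mul] at hrow hd
  rw [hM.apply_eq_rowCoeff (u := 1) (by simp; omega) (by simp; omega), hrow, map_add,
    rowCoeff_gen N p (k := p+1) (by simp; omega), if_neg (by omega),
    rowCoeff_sum N p (Finset.Icc_subset_Icc le_rfl (by omega)), if_pos (by simp; omega), zero_add,
    hd]
  rfl

end CableTau

section CableRows

variable {n p : ℕ} {w : List (ℕ × Bool)} {A B : ℕ → ℕ → FA (n*p)}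

lemma IsPhiL.append_cable_bottom (hn : 1 ≤ n) (hw : WordIn (n*p) w) (hA : IsPhiL (n*p) w A)
    (hB : IsPhiL (n*p) (w ++ cable p (tauWord 1 (n-1))) B) {s : ℕ} (hs : s ∈ Finset.Icc 1 p)
    {v : ℕ} (hv : v ∈ Finset.Icc 1 (n*p)) :
    B ((n-1)*p + s) v = A s v := by
  rw [Finset.mem_Icc] at hs
  have hN : (n-1+1)*p = n*p := by rw [Nat.sub_add_cancel hn]
  have hp : (n-1)*p + p = n*p := by rw [← Nat.succ_mul, Nat.succ_eq_add_one, hN]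
  simpa using hA.apply_append (S := ∅) (d := 0) hw hB (by simp; omega) (by simp; omega)
    (Finset.empty_subset _)
    (by rw [Finset.sum_empty, add_zero]; exact phiWord_cable_tauWord_gen_last_block hN.le hs.1 hs.2)
    hv

lemma IsPhiL.append_cable_main (hn : 1 ≤ n) (hp : 1 ≤ p) (hw : WordIn (n*p) w)
    (hA : IsPhiL (n*p) w A) (hB : IsPhiL (n*p) (w ++ cable p (tauWord 1 (n-1))) B)
    {u : ℕ} (hu1 : 1 ≤ u) (hu : u ≤ (n-1)*p) :
    ∃ c : ℕ → FA (n*p), ∀ v ∈ Finset.Icc 1 (n*p),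
      B u v = A (u+p) v + ∑ t ∈ Finset.Icc 1 p, c t * A t v := by
  obtain ⟨m, s, rfl, hs1, hsp⟩ : ∃ m s, u = m*p + s ∧ 1 ≤ s ∧ s ≤ p :=
    ⟨(u-1)/p, (u-1)%p + 1, by have := Nat.div_add_mod' (u-1) p; omega,
      by omega, Nat.mod_lt _ hp⟩
  have hm : m < n-1 := Nat.lt_of_mul_lt_mul_right (a := p) (by omega)
  have hN : (n-1+1)*p = n*p := by rw [Nat.sub_add_cancel hn]
  have hmp : (m+1)*p = m*p + p := Nat.succ_mul m p
  have hnp : (n-1)*p + p = n*p := by rw [← Nat.succ_mul, Nat.succ_eq_add_one, hN]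
  obtain ⟨d, hrow, -⟩ := phiWord_cable_tauWord_gen_row hp hm hN.le hs1 hsp
  have hup : (m+1)*p + s ≤ n*p := by
    rw [← hN]; have := Nat.mul_le_mul_right p (show m+1+1 ≤ n-1+1 by omega); nlinarith
  refine ⟨fun t => phiWord (n*p) w (d t), fun v hv => ?_⟩
  rw [hA.apply_append (u' := (m+1)*p + s) hw hB (Finset.mem_Icc.mpr (by omega))
    (Finset.mem_Icc.mpr (by omega)) (Finset.Icc_subset_Icc le_rfl (by omega)) hrow hv, hmp,
    add_right_comm]

end CableRows

section BlockRecursion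

variable {α : Type*} [Zero α] {n p : ℕ} {E : ℕ → ℕ → α}

/-- `E z r` models the `r`-th entry of a fixed column of `ε(Φ^L_{(τ^{(p)})^z})`, read in block
rows of size `p`. -/
def BlockRecursion (n p : ℕ) (E : ℕ → ℕ → α) : Prop :=
  (∀ z, 1 ≤ z → ∀ s ∈ Finset.Icc 1 p, E (z+1) ((n-1)*p + s) = E z s) ∧
  (∀ z, 1 ≤ z → (∀ t ∈ Finset.Icc 1 p, E z t = 0) →
    ∀ u, 1 ≤ u → u ≤ (n-1)*p → E (z+1) u = E z (u+p))

lemma BlockRecursion.shift (h : BlockRecursion n p E) {z : ℕ} (hz : 1 ≤ z) (m : ℕ)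
    (hvan : ∀ w, z ≤ w → w < z + m → ∀ t ∈ Finset.Icc 1 p, E w t = 0)
    {u : ℕ} (hu : 1 ≤ u) (hum : u + m*p ≤ n*p) :
    E (z+m) u = E z (u + m*p) := by
  induction m generalizing u with
  | zero => simp
  | succ m ih =>
    have hm : (m+1)*p = m*p + p := Nat.succ_mul m p
    have hn : (n-1)*p = n*p - p := Nat.sub_one_mul n p
    rw [← add_assoc, h.2 (z+m) (by omega) (hvan (z+m) (by omega) (by omega)) u hu (by omega),
      ih (fun w hw hw' => hvan w hw (by omega)) (by omega) (by omega), hm, add_comm (m*p),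
      add_assoc]

lemma BlockRecursion.collapse (h : BlockRecursion n p E) {i : ℕ} (hi : 1 ≤ i) (hin : i ≤ n)
    (hvan : ∀ w, i < w → w ≤ n → ∀ t ∈ Finset.Icc 1 p, E w t = 0)
    {s : ℕ} (hs : s ∈ Finset.Icc 1 p) :
    E (n+1) ((i-1)*p + s) = E i s := by
  rw [Finset.mem_Icc] at hs
  have hblocks : (i-1)*p + (n-i)*p = (n-1)*p := by rw [← add_mul]; congr 1; omega
  have hn : (n-1)*p = n*p - p := Nat.sub_one_mul n p
  have hp : p ≤ n*p := Nat.le_mul_of_pos_left p (by omega)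
  rw [show n + 1 = (i+1) + (n-i) by omega,
    h.shift (by omega) (n-i) (fun w hw hw' => hvan w (by omega) (by omega)) (by omega)
      (by omega),
    add_right_comm, hblocks]
  exact h.1 i hi s (Finset.mem_Icc.mpr hs)

lemma BlockRecursion.first_block_eq_zero (h : BlockRecursion n p E) {v : ℕ}
    (htop : ∀ r, p < r → r ≤ n*p → v < r → E (n+1) r = 0) :
    ∀ z, 2 ≤ z → z ≤ n → v ≤ (z-1)*p → ∀ t ∈ Finset.Icc 1 p, E z t = 0 := by
  intro z
  induction hk : n - z using Nat.strong_induction_on generalizing z with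
  | _ k ih =>
    intro hz2 hzn hv t ht
    have hvan : ∀ w, z < w → w ≤ n → ∀ t ∈ Finset.Icc 1 p, E w t = 0 := fun w hzw hwn =>
      ih (n - w) (by omega) w rfl (by omega) hwn
        (hv.trans (Nat.mul_le_mul_right p (by omega)))
    rw [← h.collapse (by omega) hzn hvan ht]
    rw [Finset.mem_Icc] at ht
    have hz : p ≤ (z-1)*p := Nat.le_mul_of_pos_left p (by omega)
    have hzn' : (z-1)*p + p ≤ n*p := by
      rw [← Nat.succ_mul]; exact Nat.mul_le_mul_right p (by omega)
    exact htop _ (by omega) (by omega) (by omega)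

end BlockRecursion

section PowWord

variable {n p : ℕ}

lemma powWord_one (n p : ℕ) : powWord n p 1 = cable p (tauWord 1 (n-1)) := by
  simp [powWord]

lemma powWord_succ (n p z : ℕ) :
    powWord n p (z+1) = powWord n p z ++ cable p (tauWord 1 (n-1)) := by
  simp [powWord, List.replicate_succ']

lemma wordIn_powWord (hn : 1 ≤ n) (z : ℕ) : WordIn (n*p) (powWord n p z) := by
  intro l hl
  simp only [powWord, List.mem_flatten, List.mem_replicate] at hl
  obtain ⟨_, ⟨-, rfl⟩, hl⟩ := hl
  exact wordIn_cable_tauWord (by rw [Nat.sub_add_cancel hn]) l hl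

lemma blockRecursion_powWord {R : Type*} [Semiring R] (hn : 1 ≤ n) (hp : 1 ≤ p)
    {M : ℕ → ℕ → ℕ → FA (n*p)} (hM : ∀ z, 1 ≤ z → IsPhiL (n*p) (powWord n p z) (M z))
    (ε : FA (n*p) →+* R) {v : ℕ} (hv : v ∈ Finset.Icc 1 (n*p)) :
    BlockRecursion n p fun z u => ε (M z u v) := by
  have hsucc : ∀ z, 1 ≤ z →
      IsPhiL (n*p) (powWord n p z ++ cable p (tauWord 1 (n-1))) (M (z+1)) :=
    fun z _ => powWord_succ n p z ▸ hM (z+1) (by omega)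
  refine ⟨fun z hz s hs => ?_, fun z hz hvan u hu1 hu => ?_⟩
  · beta_reduce
    rw [(hM z hz).append_cable_bottom hn (wordIn_powWord hn z) (hsucc z hz) hs hv]
  · obtain ⟨c, hc⟩ := (hM z hz).append_cable_main hn hp (wordIn_powWord hn z) (hsucc z hz) hu1 hu
    simp only at hvan ⊢
    rw [hc v hv, map_add, map_sum,
      Finset.sum_eq_zero fun t ht => by rw [map_mul, hvan t ht, mul_zero], add_zero]

end PowWord

/-- If `ε` sends the rows `p < r ≤ np` of `Φ^L_{α^{(p)}}` to the corresponding
standard basis rows, then `ε(Ψ^{n+1}_{ij}) = ε(Ψ^i_{1j})` (entrywise) for `1 ≤ j ≤ i ≤ n`, and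
consequently `ε((Φ^L_{α^{(p)}})_{1,p}) = −ε(a_{p+1,p})`. -/
theorem eps_block_collapse (n p : ℕ) (hn : 2 ≤ n) (hp : 2 ≤ p)
    (M : ℕ → ℕ → ℕ → FA (n*p))
    (hM : ∀ z, 1 ≤ z → IsPhiL (n*p) (powWord n p z) (M z))
    (ε : FA (n*p) →+* ℂ)
    (hε : ∀ r, p < r → r ≤ n*p → ∀ s ∈ Finset.Icc 1 (n*p),
        ε (M (n+1) r s) = if r = s then 1 else 0) :
    (∀ i j, 1 ≤ j → j ≤ i → i ≤ n →
      ∀ s ∈ Finset.Icc 1 p, ∀ t ∈ Finset.Icc 1 p,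
        ε (M (n+1) ((i-1)*p + s) ((j-1)*p + t)) = ε (M i s ((j-1)*p + t))) ∧
    ε (M (n+1) 1 p) = -ε (gen (n*p) (p+1) p) := by
  have hrec : ∀ v ∈ Finset.Icc 1 (n*p), BlockRecursion n p fun z u => ε (M z u v) :=
    fun v hv => blockRecursion_powWord (by omega) (by omega) hM ε hv
  have hvan : ∀ v ∈ Finset.Icc 1 (n*p), ∀ z, 2 ≤ z → z ≤ n → v ≤ (z-1)*p →
      ∀ t ∈ Finset.Icc 1 p, ε (M z t v) = 0 := fun v hv =>
    (hrec v hv).first_block_eq_zero fun r hpr hr hvr => by rw [hε r hpr hr v hv, if_neg (by omega)]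
  have hblock : ∀ i j, 1 ≤ j → j ≤ i → i ≤ n →
      ∀ s ∈ Finset.Icc 1 p, ∀ t ∈ Finset.Icc 1 p,
        ε (M (n+1) ((i-1)*p + s) ((j-1)*p + t)) = ε (M i s ((j-1)*p + t)) := by
    intro i j hj hji hin s hs t ht
    rw [Finset.mem_Icc] at ht
    have hjp : (j-1)*p + p = j*p := by
      rw [← Nat.succ_mul, Nat.succ_eq_add_one, Nat.sub_add_cancel hj]
    have hv : (j-1)*p + t ∈ Finset.Icc 1 (n*p) := by
      have := Nat.mul_le_mul_right p (hji.trans hin)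
      simp only [Finset.mem_Icc]; omega
    refine (hrec _ hv).collapse (by omega) hin (fun w hiw hwn => hvan _ hv w (by omega) hwn ?_) hs
    have := Nat.mul_le_mul_right p (show j ≤ w - 1 by omega)
    omega
  refine ⟨hblock, ?_⟩
  have h11 := hblock 1 1 le_rfl le_rfl (by omega) 1 (by simp; omega) p (by simp; omega)
  simp only [Nat.sub_self, Nat.zero_mul, Nat.zero_add] at h11
  have hM1 : IsPhiL (n*p) (cable p (tauWord 1 (n-1))) (M 1) := powWord_one n p ▸ hM 1 le_rfl
  rw [h11, hM1.cable_tauWord_apply_one (by omega) (by omega)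
    (by rw [Nat.sub_add_cancel (by omega)]), map_neg]
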